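/- arXiv:2105.14755 — 2 statements merged into one kernel-verified Lean document; each statement's English description precedes it below -/
import Mathlib

section
/- Let ρ : ℝ → ℂ^{N_g × N_g} be three times differentiable, H : ℝ → ℂ^{N_g × N_g} twice differentiable, and let H_t, H_tt : ℝ → ℂ^{N_g × N_g}, A, B : ℝ → L(ℂ^{N_g × N_g}, ℂ^{N_g × N_g}), and C : ℝ → Bil(ℂ^{N_g × N_g} × ℂ^{N_g × N_g}, ℂ^{N_g × N_g}) be given. Assume for all t: (i) i ρ' = [H, ρ]; (ii) H' = H_t + A(ρ'); (iii) H_t' = H_tt + B(ρ'); (iv) A'(t)(X) = B(t)(X) + C(t)(ρ'(t), X) for all matrices X. Then in the operator norm, ‖ρ'''(t)‖ ≤ ‖[H_tt, ρ]‖ + 2‖[B([H, ρ]), ρ]‖ + ‖[C([H, ρ], [H, ρ]), ρ]‖ + ‖[A([H_t, ρ]), ρ]‖ + ‖[A([A([H, ρ]), ρ]), ρ]‖ + ‖[A([H, [H, ρ]]), ρ]‖ + 2‖[H_t, [H, ρ]]‖ + ‖[H, [H_t, ρ]]‖ + 2‖[A([H, ρ]), [H, ρ]]‖ + ‖[H,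 [A([H, ρ]), ρ]]‖ + ‖[H, [H, [H, ρ]]]‖, with all quantities evaluated at t. -/
open Matrix
open scoped Matrix.Norms.L2Operator

/-!
Differentiating `i ρ' = [H, ρ]` twice by the Leibniz rule for commutators gives
`i ρ''' = [H'', ρ] + 2 [H', ρ'] + [H, ρ'']`, where the chain rules yield
`H' = H_t + A ρ'` and `H'' = H_tt + 2 B ρ' + C(ρ', ρ') + A ρ''`. Substituting
`ρ' = -i [H, ρ]` and `ρ'' = -i ([H', ρ] + [H, ρ'])` and expanding by bilinearity writes
`i ρ'''` as a combination of eleven nested commutators with coefficients of modulus one or two,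
and the triangle inequality finishes.
-/

open Complex

theorem HasDerivAt.lie {𝕜 𝔸 : Type*} [NontriviallyNormedField 𝕜] [NormedRing 𝔸]
    [NormedAlgebra 𝕜 𝔸] {f g : 𝕜 → 𝔸} {f' g' : 𝔸} {t : 𝕜}
    (hf : HasDerivAt f f' t) (hg : HasDerivAt g g' t) :
    HasDerivAt (fun s => ⁅f s, g s⁆) (⁅f', g t⁆ + ⁅f t, g'⁆) t := by
  refine ((hf.mul hg).sub (hg.mul hf)).congr_deriv ?_
  simp only [Ring.lie_def]
  abel

theorem HasDerivAt.linearMap_apply {E F : Type*} [NormedAddCommGroup E] [NormedSpace ℂ E]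
    [FiniteDimensional ℂ E] [NormedAddCommGroup F] [NormedSpace ℂ F]
    {A : ℝ → E →ₗ[ℂ] F} {A' : E →ₗ[ℂ] F} {v : ℝ → E} {v' : E} {t : ℝ}
    (hA : ∀ X, HasDerivAt (fun s => A s X) (A' X) t) (hv : HasDerivAt v v' t) :
    HasDerivAt (fun s => A s (v s)) (A' (v t) + A t v') t := by
  let b := Module.finBasis ℂ E
  have expand (L : E →ₗ[ℂ] F) (x : E) : ∑ k, b.repr x k • L (b k) = L x := by
    conv_rhs => rw [← b.sum_repr x]
    simp only [map_sum, map_smul]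
  have hcoord (k) : HasDerivAt (fun s => b.repr (v s) k) (b.repr v' k) t :=
    ((LinearMap.toContinuousLinearMap (b.coord k)).restrictScalars ℝ).hasFDerivAt.comp_hasDerivAt
      t hv
  have hsum := HasDerivAt.fun_sum (u := Finset.univ) fun k _ => (hcoord k).smul (hA (b k))
  simpa only [Pi.smul_apply', Finset.sum_add_distrib, expand] using hsum

section ISmul

variable {E : Type*} [NormedAddCommGroup E] [NormedSpace ℂ E] {f g : ℝ → E} {g' : E} {t : ℝ}

theorem hasDerivAt_of_forall_I_smul_eq (hfg : ∀ s, I • f s = g s) (hg : HasDerivAt g g' t) :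
    HasDerivAt f (-I • g') t := by
  have hf : f = fun s => -I • g s := by
    funext s
    rw [← inv_I, eq_inv_smul_iff₀ I_ne_zero, hfg]
  exact hf ▸ hg.const_smul (-I)

theorem I_smul_deriv_of_forall_I_smul_eq (hfg : ∀ s, I • f s = g s) (hg : HasDerivAt g g' t) :
    I • deriv f t = g' := by
  rw [(hasDerivAt_of_forall_I_smul_eq hfg hg).deriv, smul_smul]
  simp

end ISmul

theorem vonNeumann_third_derivative_expansion {𝔸 : Type*} [Ring 𝔸] [Algebra ℂ 𝔸]
    (A B : 𝔸 →ₗ[ℂ] 𝔸) (C : 𝔸 →ₗ[ℂ] 𝔸 →ₗ[ℂ] 𝔸) {ρ ρ₁ ρ₂ ρ₃ H H₁ H₂ Ht Htt : 𝔸}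
    (h₁ : I • ρ₁ = ⁅H, ρ⁆) (h₂ : I • ρ₂ = ⁅H₁, ρ⁆ + ⁅H, ρ₁⁆)
    (h₃ : I • ρ₃ = ⁅H₂, ρ⁆ + ⁅H₁, ρ₁⁆ + (⁅H₁, ρ₁⁆ + ⁅H, ρ₂⁆))
    (hH₁ : H₁ = Ht + A ρ₁) (hH₂ : H₂ = Htt + B ρ₁ + (B ρ₁ + C ρ₁ ρ₁ + A ρ₂)) :
    I • ρ₃ = ⁅Htt, ρ⁆
        + (-(2 * I)) • ⁅B ⁅H, ρ⁆, ρ⁆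
        + (-1 : ℂ) • ⁅C ⁅H, ρ⁆ ⁅H, ρ⁆, ρ⁆
        + (-I) • ⁅A ⁅Ht, ρ⁆, ρ⁆
        + (-1 : ℂ) • ⁅A ⁅A ⁅H, ρ⁆, ρ⁆, ρ⁆
        + (-1 : ℂ) • ⁅A ⁅H, ⁅H, ρ⁆⁆, ρ⁆
        + (-(2 * I)) • ⁅Ht, ⁅H, ρ⁆⁆
        + (-I) • ⁅H, ⁅Ht, ρ⁆⁆
        + (-2 : ℂ) • ⁅A ⁅H, ρ⁆, ⁅H, ρ⁆⁆
        + (-1 : ℂ) • ⁅H, ⁅A ⁅H, ρ⁆, ρ⁆⁆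
        + (-1 : ℂ) • ⁅H, ⁅H, ⁅H, ρ⁆⁆⁆ := by
  rw [← eq_inv_smul_iff₀ I_ne_zero, inv_I] at h₁ h₂
  subst h₁ hH₁ h₂ hH₂
  rw [h₃]
  simp only [Ring.lie_def, map_add, map_sub, map_smul, LinearMap.sub_apply,
    LinearMap.smul_apply, mul_add, add_mul, mul_sub, sub_mul, mul_smul_comm, smul_mul_assoc,
    smul_add, smul_sub, smul_smul]
  match_scalars <;> ring_nf <;> simp [I_sq]

theorem vonNeumann_third_derivative_density_bound_general
    (Ng : ℕ)
    (ρ H Ht Htt : ℝ → Matrix (Fin Ng) (Fin Ng) ℂ)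
    (A B : ℝ → (Matrix (Fin Ng) (Fin Ng) ℂ →ₗ[ℂ] Matrix (Fin Ng) (Fin Ng) ℂ))
    (C : ℝ → (Matrix (Fin Ng) (Fin Ng) ℂ →ₗ[ℂ]
          Matrix (Fin Ng) (Fin Ng) ℂ →ₗ[ℂ] Matrix (Fin Ng) (Fin Ng) ℂ))
    (hρ : Differentiable ℝ ρ)
    (hH : Differentiable ℝ H)
    (hHt : Differentiable ℝ Ht)
    (heqρ : ∀ t, Complex.I • deriv ρ t = ⁅H t, ρ t⁆)
    (hchainH : ∀ t, deriv H t = Ht t + A t (deriv ρ t))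
    (hchainHt : ∀ t, deriv Ht t = Htt t + B t (deriv ρ t))
    (hchainA : ∀ t X, HasDerivAt (fun s => A s X) (B t X + C t (deriv ρ t) X) t) :
    ∀ t, ‖deriv (deriv (deriv ρ)) t‖ ≤
      ‖⁅Htt t, ρ t⁆‖
      + 2 * ‖⁅B t ⁅H t, ρ t⁆, ρ t⁆‖
      + ‖⁅C t ⁅H t, ρ t⁆ ⁅H t, ρ t⁆, ρ t⁆‖
      + ‖⁅A t ⁅Ht t, ρ t⁆, ρ t⁆‖
      + ‖⁅A t ⁅A t ⁅H t, ρ t⁆, ρ t⁆, ρ t⁆‖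
      + ‖⁅A t ⁅H t, ⁅H t, ρ t⁆⁆, ρ t⁆‖
      + 2 * ‖⁅Ht t, ⁅H t, ρ t⁆⁆‖
      + ‖⁅H t, ⁅Ht t, ρ t⁆⁆‖
      + 2 * ‖⁅A t ⁅H t, ρ t⁆, ⁅H t, ρ t⁆⁆‖
      + ‖⁅H t, ⁅A t ⁅H t, ρ t⁆, ρ t⁆⁆‖
      + ‖⁅H t, ⁅H t, ⁅H t, ρ t⁆⁆⁆‖ := by
  intro t
  have dρ (s) : HasDerivAt ρ (deriv ρ s) s := (hρ s).hasDerivAt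
  have dH (s) : HasDerivAt H (deriv H s) s := (hH s).hasDerivAt
  have dρ₁ (s) : HasDerivAt (deriv ρ) (deriv (deriv ρ) s) s :=
    (hasDerivAt_of_forall_I_smul_eq heqρ ((dH s).lie (dρ s))).differentiableAt.hasDerivAt
  have hρ₂ (s) : I • deriv (deriv ρ) s = ⁅deriv H s, ρ s⁆ + ⁅H s, deriv ρ s⁆ :=
    I_smul_deriv_of_forall_I_smul_eq heqρ ((dH s).lie (dρ s))
  have dH₁ : HasDerivAt (deriv H) (Htt t + B t (deriv ρ t)
      + (B t (deriv ρ t) + C t (deriv ρ t) (deriv ρ t) + A t (deriv (deriv ρ) t))) t := by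
    rw [funext hchainH, ← hchainHt]
    exact (hHt t).hasDerivAt.add
      (HasDerivAt.linearMap_apply (A' := B t + C t (deriv ρ t)) (hchainA t) (dρ₁ t))
  have hρ₃ := I_smul_deriv_of_forall_I_smul_eq hρ₂
    ((dH₁.differentiableAt.hasDerivAt.lie (dρ t)).add ((dH t).lie (dρ₁ t)))
  have hexp := vonNeumann_third_derivative_expansion (A t) (B t) (C t) (heqρ t) (hρ₂ t) hρ₃
    (hchainH t) dH₁.deriv
  calc ‖deriv (deriv (deriv ρ)) t‖ = ‖I • deriv (deriv (deriv ρ)) t‖ := by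
        rw [norm_smul, norm_I, one_mul]
    _ ≤ _ := by
      rw [hexp]
      iterate 10 refine (norm_add_le _ _).trans (add_le_add ?_ ?_)
      all_goals simp [norm_smul]

/-- **Commutator bound on the third derivative of the density matrix** along the nonlinear
von Neumann flow `i ρ' = [H, ρ]`, with the chain rules `H' = H_t + A(ρ')`,
`H_t' = H_tt + B(ρ')`, and `A'(X) = B(X) + C(ρ', X)`. Every term on the right-hand side is
the norm of a (possibly nested) commutator. -/
theorem vonNeumann_third_derivative_density_bound
    (Ng : ℕ)
    (ρ H Ht Htt : ℝ → Matrix (Fin Ng) (Fin Ng) ℂ)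
    (A B : ℝ → (Matrix (Fin Ng) (Fin Ng) ℂ →ₗ[ℂ] Matrix (Fin Ng) (Fin Ng) ℂ))
    (C : ℝ → (Matrix (Fin Ng) (Fin Ng) ℂ →ₗ[ℂ]
          Matrix (Fin Ng) (Fin Ng) ℂ →ₗ[ℂ] Matrix (Fin Ng) (Fin Ng) ℂ))
    (hρ : Differentiable ℝ ρ) (hρ' : Differentiable ℝ (deriv ρ))
    (hρ'' : Differentiable ℝ (deriv (deriv ρ)))
    (hH : Differentiable ℝ H) (hH' : Differentiable ℝ (deriv H))
    (hHt : Differentiable ℝ Ht)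
    (heqρ : ∀ t, Complex.I • deriv ρ t = ⁅H t, ρ t⁆)
    (hchainH : ∀ t, deriv H t = Ht t + A t (deriv ρ t))
    (hchainHt : ∀ t, deriv Ht t = Htt t + B t (deriv ρ t))
    (hchainA : ∀ t X, HasDerivAt (fun s => A s X) (B t X + C t (deriv ρ t) X) t) :
    ∀ t, ‖deriv (deriv (deriv ρ)) t‖ ≤
      ‖⁅Htt t, ρ t⁆‖
      + 2 * ‖⁅B t ⁅H t, ρ t⁆, ρ t⁆‖
      + ‖⁅C t ⁅H t, ρ t⁆ ⁅H t, ρ t⁆, ρ t⁆‖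
      + ‖⁅A t ⁅Ht t, ρ t⁆, ρ t⁆‖
      + ‖⁅A t ⁅A t ⁅H t, ρ t⁆, ρ t⁆, ρ t⁆‖
      + ‖⁅A t ⁅H t, ⁅H t, ρ t⁆⁆, ρ t⁆‖
      + 2 * ‖⁅Ht t, ⁅H t, ρ t⁆⁆‖
      + ‖⁅H t, ⁅Ht t, ρ t⁆⁆‖
      + 2 * ‖⁅A t ⁅H t, ρ t⁆, ⁅H t, ρ t⁆⁆‖
      + ‖⁅H t, ⁅A t ⁅H t, ρ t⁆, ρ t⁆⁆‖
      + ‖⁅H t, ⁅H t, ⁅H t, ρ t⁆⁆⁆‖ :=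
  vonNeumann_third_derivative_density_bound_general Ng ρ H Ht Htt A B C hρ hH hHt heqρ hchainH
    hchainHt hchainA
end

section
/- Let Φ : ℝ → ℂ^{N_g × N} and P : ℝ → ℂ^{N_g × N_g} be three times differentiable, and assume for all t: P(t) Φ(t) = Φ(t), P(t) Φ'(t) = 0, and ‖Φ(t)‖ ≤ 1 in the operator norm. Then for all t: ‖Φ'(t)‖ ≤ ‖P'(t)‖; ‖Φ''(t)‖ ≤ ‖P''(t)‖ + ‖P'(t)‖²; and ‖Φ'''(t)‖ ≤ ‖P'''(t)‖ + 3 ‖P''(t)‖ ‖P'(t)‖ + ‖P'(t)‖³. -/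
open Matrix
open scoped Matrix.Norms.L2Operator

/-!
Differentiating `P Φ = Φ` and using the parallel-transport condition `P Φ' = 0` gives
`Φ' = P' Φ`, hence `Φ'' = P'' Φ + P' Φ'` and `Φ''' = P''' Φ + 2 P'' Φ' + P' Φ''`. The bounds
follow from submultiplicativity of the operator norm and `‖Φ‖ ≤ 1`, feeding each bound into the
next.
-/

namespace Matrix

variable {l m n : Type*} [Fintype l] [Fintype m] [Fintype n] [DecidableEq m] [DecidableEq n]

lemma l2_opNorm_mul_add_mul_le {𝕜 : Type*} [RCLike 𝕜] (A : Matrix l m 𝕜) (X : Matrix m n 𝕜)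
    (B : Matrix l m 𝕜) (Y : Matrix m n 𝕜) : ‖A * X + B * Y‖ ≤ ‖A‖ * ‖X‖ + ‖B‖ * ‖Y‖ :=
  (norm_add_le _ _).trans (add_le_add (l2_opNorm_mul A X) (l2_opNorm_mul B Y))

noncomputable def l2OpMulCLM : Matrix l m ℂ →L[ℝ] Matrix m n ℂ →L[ℝ] Matrix l n ℂ :=
  (mulLinearMap ℝ).mkContinuous₂ 1 fun A B => by simpa using l2_opNorm_mul A B

@[simp]
lemma l2OpMulCLM_apply (A : Matrix l m ℂ) (X : Matrix m n ℂ) : l2OpMulCLM A X = A * X := rfl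

end Matrix

section Calculus

variable {l m n : Type*} [Fintype l] [Fintype m] [Fintype n] [DecidableEq m] [DecidableEq n]
  {A : ℝ → Matrix l m ℂ} {X : ℝ → Matrix m n ℂ} {A' : Matrix l m ℂ} {X' : Matrix m n ℂ} {t : ℝ}

theorem HasDerivAt.matrix_mul (hA : HasDerivAt A A' t) (hX : HasDerivAt X X' t) :
    HasDerivAt (fun s => A s * X s) (A' * X t + A t * X') t := by
  simpa only [l2OpMulCLM_apply, add_comm] using
    l2OpMulCLM.hasDerivAt_of_bilinear (fun _ => hA) (fun _ => hX)

theorem deriv_matrix_mul (hA : Differentiable ℝ A) (hX : Differentiable ℝ X) :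
    deriv (fun s => A s * X s) = fun s => deriv A s * X s + A s * deriv X s :=
  funext fun s => ((hA s).hasDerivAt.matrix_mul (hX s).hasDerivAt).deriv

theorem deriv_eq_deriv_mul_of_mul_eq_self {P : ℝ → Matrix m m ℂ} {Φ : ℝ → Matrix m n ℂ}
    (hP : Differentiable ℝ P) (hΦ : Differentiable ℝ Φ) (hrange : ∀ t, P t * Φ t = Φ t)
    (hpt : ∀ t, P t * deriv Φ t = 0) : deriv Φ = fun t => deriv P t * Φ t := by
  have hΦ_eq : Φ = fun t => P t * Φ t := funext fun t => (hrange t).symm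
  calc deriv Φ = deriv (fun t => P t * Φ t) := congrArg deriv hΦ_eq
    _ = fun t => deriv P t * Φ t + P t * deriv Φ t := deriv_matrix_mul hP hΦ
    _ = fun t => deriv P t * Φ t := by simp only [hpt, add_zero]

end Calculus

theorem pt_wavefunction_derivative_bounds_general
    (Ng N : ℕ)
    (Φ : ℝ → Matrix (Fin Ng) (Fin N) ℂ)
    (P : ℝ → Matrix (Fin Ng) (Fin Ng) ℂ)
    (hΦ : Differentiable ℝ Φ) (hΦ' : Differentiable ℝ (deriv Φ))
    (hP : Differentiable ℝ P) (hP' : Differentiable ℝ (deriv P))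
    (hP'' : Differentiable ℝ (deriv (deriv P)))
    (hrange : ∀ t, P t * Φ t = Φ t)
    (hpt : ∀ t, P t * deriv Φ t = 0)
    (hnorm : ∀ t, ‖Φ t‖ ≤ 1) :
    ∀ t, ‖deriv Φ t‖ ≤ ‖deriv P t‖ ∧
      ‖deriv (deriv Φ) t‖ ≤ ‖deriv (deriv P) t‖ + ‖deriv P t‖ ^ 2 ∧
      ‖deriv (deriv (deriv Φ)) t‖ ≤
        ‖deriv (deriv (deriv P)) t‖ + 3 * (‖deriv (deriv P) t‖ * ‖deriv P t‖)
          + ‖deriv P t‖ ^ 3 := by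
  intro t
  have h1 := deriv_eq_deriv_mul_of_mul_eq_self hP hΦ hrange hpt
  have h2 : deriv (deriv Φ) = fun s => deriv (deriv P) s * Φ s + deriv P s * deriv Φ s :=
    (congrArg deriv h1).trans (deriv_matrix_mul hP' hΦ)
  have h3 : deriv (deriv (deriv Φ)) t =
      (deriv (deriv (deriv P)) t * Φ t + deriv (deriv P) t * deriv Φ t)
        + (deriv (deriv P) t * deriv Φ t + deriv P t * deriv (deriv Φ) t) :=
    (congrArg (deriv · t) h2).trans <|
      (((hP'' t).hasDerivAt.matrix_mul (hΦ t).hasDerivAt).add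
        ((hP' t).hasDerivAt.matrix_mul (hΦ' t).hasDerivAt)).deriv
  have b1 : ‖deriv Φ t‖ ≤ ‖deriv P t‖ := by
    rw [h1]
    exact (l2_opNorm_mul _ _).trans (mul_le_of_le_one_right (norm_nonneg _) (hnorm t))
  have b2 : ‖deriv (deriv Φ) t‖ ≤ ‖deriv (deriv P) t‖ + ‖deriv P t‖ ^ 2 := by
    rw [h2, sq]
    refine (l2_opNorm_mul_add_mul_le _ _ _ _).trans ?_
    gcongr
    exact mul_le_of_le_one_right (norm_nonneg _) (hnorm t)
  refine ⟨b1, b2, ?_⟩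
  rw [h3]
  refine (norm_add_le _ _).trans <|
    (add_le_add (l2_opNorm_mul_add_mul_le _ _ _ _) (l2_opNorm_mul_add_mul_le _ _ _ _)).trans ?_
  calc _ ≤ ‖deriv (deriv (deriv P)) t‖ * 1 + ‖deriv (deriv P) t‖ * ‖deriv P t‖
        + (‖deriv (deriv P) t‖ * ‖deriv P t‖
          + ‖deriv P t‖ * (‖deriv (deriv P) t‖ + ‖deriv P t‖ ^ 2)) := by
        gcongr; exact hnorm t
    _ = _ := by ring

/-- **Derivatives of parallel-transported wavefunctions are controlled by derivatives of
the projector.** If `P Φ = Φ`, `P Φ' = 0`, and `‖Φ‖ ≤ 1` in the operator norm, then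
`‖Φ'‖ ≤ ‖P'‖`, `‖Φ''‖ ≤ ‖P''‖ + ‖P'‖²`, and
`‖Φ'''‖ ≤ ‖P'''‖ + 3 ‖P''‖ ‖P'‖ + ‖P'‖³`. -/
theorem pt_wavefunction_derivative_bounds
    (Ng N : ℕ)
    (Φ : ℝ → Matrix (Fin Ng) (Fin N) ℂ)
    (P : ℝ → Matrix (Fin Ng) (Fin Ng) ℂ)
    (hΦ : Differentiable ℝ Φ) (hΦ' : Differentiable ℝ (deriv Φ))
    (hΦ'' : Differentiable ℝ (deriv (deriv Φ)))
    (hP : Differentiable ℝ P) (hP' : Differentiable ℝ (deriv P))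
    (hP'' : Differentiable ℝ (deriv (deriv P)))
    (hrange : ∀ t, P t * Φ t = Φ t)
    (hpt : ∀ t, P t * deriv Φ t = 0)
    (hnorm : ∀ t, ‖Φ t‖ ≤ 1) :
    ∀ t, ‖deriv Φ t‖ ≤ ‖deriv P t‖ ∧
      ‖deriv (deriv Φ) t‖ ≤ ‖deriv (deriv P) t‖ + ‖deriv P t‖ ^ 2 ∧
      ‖deriv (deriv (deriv Φ)) t‖ ≤
        ‖deriv (deriv (deriv P)) t‖ + 3 * (‖deriv (deriv P) t‖ * ‖deriv P t‖)
          + ‖deriv P t‖ ^ 3 :=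
  pt_wavefunction_derivative_bounds_general Ng N Φ P hΦ hΦ' hP hP' hP'' hrange hpt hnorm
end
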